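/- arXiv:1012.1394 — 3 statements merged into one kernel-verified Lean document; each statement's English description precedes it below -/
import Mathlib

section
/- Let R be a noetherian commutative ring and M an R-module. If Ext^i_R(M, κ(p)) = 0 for every i > 0 and every prime ideal p of R, then M is a flat R-module. -/
/-!
Let `P → M` be a projective resolution. Since `Hom_R(P, κ(p)) = Hom_{κ(p)}(κ(p) ⊗ P, κ(p))` and
dualising is exact and faithful over a field, the vanishing of `Ext^{>0}(M, κ(p))` forces
`κ(p) ⊗ P` to be exact in positive degrees, i.e. `Tor_{>0}(κ(p), M) = 0`. Noetherian induction
on `p` transfers this to `R ⧸ p`: in `0 → R ⧸ p → κ(p) → Q → 0` every finitely generated submodule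
of `Q` has a prime filtration with factors `R ⧸ q`, `q ⊋ p` (as `p` kills `Q` and `Q` vanishes at
`p`), so `Tor_{i+1}(Q, M) = 0` and hence `Tor_i(R ⧸ p, M) = 0`. Prime filtrations again
give `Tor_1(R ⧸ I, M) = 0` for every ideal `I`, which is flatness of `M`.
-/

open CategoryTheory

universe u

/-- `κ(p)`: the residue field of the localization of `R` at the prime `p`. -/
noncomputable abbrev kappa {R : Type u} [CommRing R] (p : Ideal R) [p.IsPrime] : Type u :=
  IsLocalRing.ResidueField (Localization.AtPrime p)

open LinearMap TensorProduct

lemma LinearMap.lTensor_rTensor_comm {R A B X Y : Type*} [CommSemiring R] [AddCommMonoid A]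
    [AddCommMonoid B] [AddCommMonoid X] [AddCommMonoid Y] [Module R A] [Module R B] [Module R X]
    [Module R Y] (f : A →ₗ[R] B) (g : X →ₗ[R] Y) (z : A ⊗[R] X) :
    lTensor B g (rTensor X f z) = rTensor Y f (lTensor A g z) := by
  rw [← LinearMap.comp_apply, ← LinearMap.comp_apply, rTensor_comp_lTensor, lTensor_comp_rTensor]

lemma LinearMap.ker_le_range_of_dual {K U V W : Type*} [Field K] [AddCommGroup U] [Module K U]
    [AddCommGroup V] [Module K V] [AddCommGroup W] [Module K W] {f : U →ₗ[K] V}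
    {g : V →ₗ[K] W}
    (h : ∀ δ : Module.Dual K V, δ ∘ₗ f = 0 → ∃ ψ : Module.Dual K W, ψ ∘ₗ g = δ) :
    ker g ≤ range f := by
  intro z hz
  by_contra hzf
  obtain ⟨δ, hδz, hδf⟩ := (range f).exists_dual_map_eq_bot_of_notMem hzf inferInstance
  obtain ⟨ψ, rfl⟩ := h δ (by
    rw [← range_eq_bot, range_comp, hδf])
  exact hδz (by rw [comp_apply, mem_ker.mp hz, map_zero])

lemma LinearMap.exists_lTensor_eq_of_hom_exact {R k A B C : Type*} [CommRing R] [Field k]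
    [Algebra R k] [AddCommGroup A] [Module R A] [AddCommGroup B] [Module R B] [AddCommGroup C]
    [Module R C] {f : A →ₗ[R] B} {g : B →ₗ[R] C}
    (h : ∀ φ : B →ₗ[R] k, φ ∘ₗ f = 0 → ∃ ψ : C →ₗ[R] k, ψ ∘ₗ g = φ)
    {z : k ⊗[R] B} (hz : lTensor k g z = 0) : ∃ w : k ⊗[R] A, lTensor k f w = z := by
  suffices ker (g.baseChange k) ≤ range (f.baseChange k) from this hz
  refine ker_le_range_of_dual fun δ hδ ↦ ?_
  obtain ⟨ψ, hψ⟩ := h ((liftBaseChangeEquiv k).symm δ) (by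
    ext a
    simpa using congr($hδ (1 ⊗ₜ a)))
  refine ⟨liftBaseChange k ψ, ?_⟩
  ext b
  simpa using congr($hψ b)

section Kappa

variable {R : Type u} [CommRing R] (p : Ideal R) [p.IsPrime]

lemma kappa_exists_smul_mem_range (y : kappa p) :
    ∃ s ∉ p, s • y ∈ range (Algebra.linearMap R (kappa p)) := by
  obtain ⟨y, rfl⟩ := IsLocalRing.residue_surjective y
  obtain ⟨x, s, rfl⟩ := IsLocalization.exists_mk'_eq p.primeCompl y
  refine ⟨s, s.2, x, ?_⟩
  simp [Algebra.smul_def, IsScalarTower.algebraMap_apply R (Localization.AtPrime p) (kappa p),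
    ← map_mul]

noncomputable def quotientToKappa : (R ⧸ p) →ₗ[R] kappa p :=
  (Algebra.linearMap (R ⧸ p) (kappa p)).restrictScalars R

lemma quotientToKappa_injective : Function.Injective (quotientToKappa p) :=
  p.injective_algebraMap_quotient_residueField

lemma lt_of_mem_support_kappa_quotient {q : PrimeSpectrum R}
    (hq : q ∈ Module.support R (kappa p ⧸ range (quotientToKappa p))) : p < q.asIdeal := by
  have hp : p ≤ q.asIdeal := by
    refine le_trans (fun r hr ↦ Module.mem_annihilator.mpr fun t ↦ ?_)
      (Module.annihilator_le_of_mem_support hq)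
    obtain ⟨y, rfl⟩ := Submodule.mkQ_surjective _ t
    rw [← map_smul, Algebra.smul_def, Ideal.algebraMap_residueField_eq_zero.mpr hr, zero_mul,
      map_zero]
  refine lt_of_le_of_ne hp fun hpq ↦ ?_
  refine Module.notMem_support_iff'.mpr (fun t ↦ ?_) hq
  obtain ⟨y, rfl⟩ := Submodule.mkQ_surjective _ t
  obtain ⟨s, hs, x, hx⟩ := kappa_exists_smul_mem_range p y
  refine ⟨s, hpq ▸ hs, ?_⟩
  rw [← map_smul, Submodule.mkQ_apply, Submodule.Quotient.mk_eq_zero]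
  exact ⟨Ideal.Quotient.mk p x, hx⟩

end Kappa

section Complex

variable {R : Type u} [CommRing R] (P : ChainComplex (ModuleCat.{u} R) ℕ)

/-- Exactness of `N ⊗ P` at degree `n + 1`: for a flat resolution `P` of `M` this is
`Tor_{n+1}(N, M) = 0`. -/
def TorVanishes (N : Type*) [AddCommGroup N] [Module R N] (n : ℕ) : Prop :=
  ∀ z : N ⊗[R] P.X (n + 1), lTensor N (P.d (n + 1) n).hom z = 0 →
    ∃ w : N ⊗[R] P.X (n + 2), lTensor N (P.d (n + 2) (n + 1)).hom w = z

lemma lTensor_d_lTensor_d (N : Type*) [AddCommGroup N] [Module R N] (n : ℕ)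
    (w : N ⊗[R] P.X (n + 2)) :
    lTensor N (P.d (n + 1) n).hom (lTensor N (P.d (n + 2) (n + 1)).hom w) = 0 := by
  rw [← LinearMap.comp_apply, ← lTensor_comp, ← ModuleCat.hom_comp, P.d_comp_d]
  simp

variable {P}

lemma torVanishes_of_subsingleton (N : Type*) [AddCommGroup N] [Module R N] [Subsingleton N]
    (n : ℕ) : TorVanishes P N n :=
  fun _ _ ↦ ⟨0, Subsingleton.elim _ _⟩

lemma TorVanishes.of_linearEquiv {N N' : Type*} [AddCommGroup N] [Module R N] [AddCommGroup N']
    [Module R N'] (e : N ≃ₗ[R] N') {n : ℕ} (h : TorVanishes P N n) : TorVanishes P N' n := by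
  intro z hz
  obtain ⟨w, hw⟩ := h (rTensor _ e.symm.toLinearMap z) (by rw [lTensor_rTensor_comm, hz, map_zero])
  refine ⟨rTensor _ e.toLinearMap w, ?_⟩
  rw [lTensor_rTensor_comm, hw, ← rTensor_comp_apply, e.comp_symm, rTensor_id, LinearMap.id_apply]

variable [∀ n, Module.Flat R (P.X n)]
variable {N₁ N₂ N₃ : Type*} [AddCommGroup N₁] [Module R N₁] [AddCommGroup N₂] [Module R N₂]
  [AddCommGroup N₃] [Module R N₃] {f : N₁ →ₗ[R] N₂} {g : N₂ →ₗ[R] N₃}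

lemma TorVanishes.of_exact (hf : Function.Injective f) (hg : Function.Surjective g)
    (hfg : Function.Exact f g) {n : ℕ} (h₁ : TorVanishes P N₁ n) (h₃ : TorVanishes P N₃ n) :
    TorVanishes P N₂ n := by
  intro z hz
  obtain ⟨w₃, hw₃⟩ := h₃ (rTensor _ g z) (by rw [lTensor_rTensor_comm, hz, map_zero])
  obtain ⟨w, rfl⟩ := rTensor_surjective _ hg w₃
  obtain ⟨z₁, hz₁⟩ : z - lTensor N₂ (P.d (n + 2) (n + 1)).hom w ∈ range (rTensor _ f) := by
    refine (rTensor_exact _ hfg hg _).mp ?_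
    rw [map_sub, ← lTensor_rTensor_comm, hw₃, sub_self]
  have hz₁_cycle : lTensor N₁ (P.d (n + 1) n).hom z₁ = 0 := by
    apply Module.Flat.rTensor_preserves_injective_linearMap f hf
    rw [map_zero, ← lTensor_rTensor_comm, hz₁, map_sub, hz, lTensor_d_lTensor_d, sub_self]
  obtain ⟨w₁, hw₁⟩ := h₁ z₁ hz₁_cycle
  refine ⟨w + rTensor _ f w₁, ?_⟩
  rw [map_add, lTensor_rTensor_comm, hw₁, hz₁, add_sub_cancel]

/-- Chain-level form of the vanishing of the connecting map `Tor_{m+1}(N₃, M) → Tor_m(N₁, M)`. -/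
lemma TorVanishes.exists_lTensor_d_eq (hf : Function.Injective f) (hg : Function.Surjective g)
    (hfg : Function.Exact f g) {m : ℕ} (h₃ : TorVanishes P N₃ m) {z : N₁ ⊗[R] P.X m}
    {w : N₂ ⊗[R] P.X (m + 1)} (hw : lTensor N₂ (P.d (m + 1) m).hom w = rTensor _ f z) :
    ∃ u : N₁ ⊗[R] P.X (m + 1), lTensor N₁ (P.d (m + 1) m).hom u = z := by
  have hgf : g ∘ₗ f = 0 := hfg.linearMap_comp_eq_zero
  obtain ⟨v₃, hv₃⟩ := h₃ (rTensor _ g w) (by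
    rw [lTensor_rTensor_comm, hw, ← rTensor_comp_apply, hgf, rTensor_zero, LinearMap.zero_apply])
  obtain ⟨v, rfl⟩ := rTensor_surjective _ hg v₃
  obtain ⟨u, hu⟩ : w - lTensor N₂ (P.d (m + 2) (m + 1)).hom v ∈ range (rTensor _ f) := by
    refine (rTensor_exact _ hfg hg _).mp ?_
    rw [map_sub, ← lTensor_rTensor_comm, hv₃, sub_self]
  refine ⟨u, Module.Flat.rTensor_preserves_injective_linearMap f hf ?_⟩
  rw [← lTensor_rTensor_comm, hu, map_sub, hw, lTensor_d_lTensor_d, sub_zero]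

lemma TorVanishes.left_of_exact (hf : Function.Injective f) (hg : Function.Surjective g)
    (hfg : Function.Exact f g) {n : ℕ} (h₂ : TorVanishes P N₂ n)
    (h₃ : TorVanishes P N₃ (n + 1)) : TorVanishes P N₁ n := by
  intro z hz
  obtain ⟨w, hw⟩ := h₂ (rTensor _ f z) (by rw [lTensor_rTensor_comm, hz, map_zero])
  exact h₃.exists_lTensor_d_eq hf hg hfg hw

lemma TorVanishes.of_forall_fg {N : Type*} [AddCommGroup N] [Module R N] {n : ℕ}
    (h : ∀ N' : Submodule R N, N'.FG → TorVanishes P N' n) : TorVanishes P N n := by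
  intro z hz
  obtain ⟨N', hN', z', rfl⟩ := Submodule.exists_fg_le_eq_rTensor_subtype z
  have hz' : lTensor N' (P.d (n + 1) n).hom z' = 0 := by
    apply Module.Flat.rTensor_preserves_injective_linearMap _ N'.injective_subtype
    rw [map_zero, ← lTensor_rTensor_comm, hz]
  obtain ⟨w', hw'⟩ := h N' hN' z' hz'
  exact ⟨rTensor _ N'.subtype w', by rw [lTensor_rTensor_comm, hw']⟩

section Noetherian

variable [IsNoetherianRing R]

lemma TorVanishes.of_support_subset_of_finite {S : Set (PrimeSpectrum R)} {n : ℕ}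
    (hS : ∀ q ∈ S, TorVanishes P (R ⧸ q.asIdeal) n) {N : Type u} [AddCommGroup N] [Module R N]
    [hN : Module.Finite R N] (hsupp : Module.support R N ⊆ S) : TorVanishes P N n := by
  revert hsupp
  induction hN using IsNoetherianRing.induction_on_isQuotientEquivQuotientPrime R with
  | subsingleton N => exact fun _ ↦ torVanishes_of_subsingleton N n
  | quotient N q e =>
    intro hsupp
    refine (hS q (hsupp ?_)).of_linearEquiv e.symm
    rw [e.support_eq, Module.support_of_algebra, Ideal.Quotient.algebraMap_eq, Ideal.mk_ker]
    exact (PrimeSpectrum.mem_zeroLocus _ _).mpr le_rfl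
  | exact N₁ N₂ N₃ f g hf hg hfg h₁ h₃ =>
    intro hsupp
    exact .of_exact hf hg hfg (h₁ ((Module.support_subset_of_injective f hf).trans hsupp))
      (h₃ ((Module.support_subset_of_surjective g hg).trans hsupp))

lemma TorVanishes.of_support_subset {S : Set (PrimeSpectrum R)} {n : ℕ}
    (hS : ∀ q ∈ S, TorVanishes P (R ⧸ q.asIdeal) n) {N : Type u} [AddCommGroup N] [Module R N]
    (hsupp : Module.support R N ⊆ S) : TorVanishes P N n :=
  .of_forall_fg fun N' hN' ↦
    have : Module.Finite R N' := Module.Finite.iff_fg.mpr hN'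
    .of_support_subset_of_finite hS
      ((Module.support_subset_of_injective _ N'.injective_subtype).trans hsupp)

lemma TorVanishes.quotient_of_kappa
    (hκ : ∀ (p : Ideal R) [p.IsPrime] (n : ℕ), TorVanishes P (kappa p) n)
    (p : Ideal R) [p.IsPrime] (n : ℕ) : TorVanishes P (R ⧸ p) n := by
  suffices ∀ p : Ideal R, p.IsPrime → ∀ n, TorVanishes P (R ⧸ p) n from this p ‹_› n
  intro p
  induction p using WellFoundedGT.induction with
  | _ p ih =>
  intro _ n
  have hQ : TorVanishes P (kappa p ⧸ range (quotientToKappa p)) (n + 1) :=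
    .of_support_subset (S := {q | p < q.asIdeal}) (fun q hq ↦ ih q.asIdeal hq q.isPrime (n + 1))
      fun q hq ↦ lt_of_mem_support_kappa_quotient p hq
  exact .left_of_exact (quotientToKappa_injective p) (Submodule.mkQ_surjective _)
    (exact_map_mkQ_range _) (hκ p n) hQ

end Noetherian

lemma flat_of_torVanishes {M : Type u} [AddCommGroup M] [Module R M] (ε : P.X 0 →ₗ[R] M)
    (hε : Function.Surjective ε) (hexact : Function.Exact (P.d 1 0).hom ε)
    (h : ∀ I : Ideal R, TorVanishes P (R ⧸ I) 0) : Module.Flat R M := by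
  refine Module.Flat.iff_rTensor_injective'.mpr fun I ↦ (injective_iff_map_eq_zero _).mpr ?_
  intro ξ hξ
  obtain ⟨ξ, rfl⟩ := lTensor_surjective I hε ξ
  obtain ⟨w, hw⟩ : rTensor _ I.subtype ξ ∈ range (lTensor R (P.d 1 0).hom) :=
    (lTensor_exact R hexact hε _).mp (by rw [lTensor_rTensor_comm, hξ])
  obtain ⟨u, rfl⟩ := (h I).exists_lTensor_d_eq I.injective_subtype I.mkQ_surjective
    (exact_subtype_mkQ I) hw
  rw [← lTensor_comp_apply, hexact.linearMap_comp_eq_zero, lTensor_zero, LinearMap.zero_apply]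

end Complex

namespace CategoryTheory.ProjectiveResolution

variable {R : Type u} [CommRing R] {Z : ModuleCat.{u} R} (P : ProjectiveResolution Z)

instance flat_complex_X (n : ℕ) : Module.Flat R (P.complex.X n) :=
  have := (IsProjective.iff_projective _).mpr (P.projective n)
  inferInstance

lemma exists_comp_d_eq_of_subsingleton_ext (K : ModuleCat.{u} R) (n : ℕ)
    (hK : Subsingleton (((Ext R (ModuleCat.{u} R) (n + 1)).obj (Opposite.op Z)).obj K))
    (φ : P.complex.X (n + 1) →ₗ[R] K) (hφ : φ ∘ₗ (P.complex.d (n + 2) (n + 1)).hom = 0) :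
    ∃ ψ : P.complex.X n →ₗ[R] K, ψ ∘ₗ (P.complex.d (n + 1) n).hom = φ := by
  have hzero : Limits.IsZero ((P.complex.linearYonedaObj R K).homology (n + 1)) :=
    have := (P.isoExt (R := R) (n + 1) K).toLinearEquiv.toEquiv.symm.subsingleton
    ModuleCat.isZero_of_subsingleton _
  have hexact := (HomologicalComplex.exactAt_iff_isZero_homology _ _).mpr hzero
  rw [HomologicalComplex.exactAt_iff' _ n (n + 1) (n + 2) (by simp) (by simp),
    ShortComplex.moduleCat_exact_iff] at hexact
  obtain ⟨ψ, hψ⟩ := hexact (ModuleCat.ofHom φ) (ModuleCat.hom_ext hφ)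
  exact ⟨ψ.hom, congrArg ModuleCat.Hom.hom hψ⟩

lemma function_exact_d_π : Function.Exact (P.complex.d 1 0).hom (P.π.f 0).hom :=
  (ShortComplex.ShortExact.moduleCat_exact_iff_function_exact
    (.mk (P.complex.d 1 0) (P.π.f 0) P.complex_d_comp_π_f_zero)).mp
    (ShortComplex.exact_of_g_is_cokernel _ P.isColimitCokernelCofork)

lemma surjective_π : Function.Surjective (P.π.f 0).hom :=
  (ModuleCat.epi_iff_surjective _).mp inferInstance

end CategoryTheory.ProjectiveResolution

/-- Let `R` be a noetherian commutative ring and `M` an `R`-module.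
If `Ext^i_R(M, κ(p)) = 0` for every `i > 0` and every prime ideal `p` of `R`, then
`M` is a flat `R`-module. -/
theorem stmt_13 (R : Type u) [CommRing R] [IsNoetherianRing R]
    (M : Type u) [AddCommGroup M] [Module R M]
    (h : ∀ (i : ℕ), 0 < i → ∀ (p : Ideal R) [p.IsPrime],
      Subsingleton (((Ext R (ModuleCat.{u} R) i).obj
        (Opposite.op (ModuleCat.of R M))).obj (ModuleCat.of R (kappa p)))) :
    Module.Flat R M := by
  obtain ⟨P⟩ := HasProjectiveResolution.out (Z := ModuleCat.of R M)
  have hκ (p : Ideal R) [p.IsPrime] (n : ℕ) : TorVanishes P.complex (kappa p) n := fun _ hz ↦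
    exists_lTensor_eq_of_hom_exact
      (P.exists_comp_d_eq_of_subsingleton_ext (.of R (kappa p)) n (h (n + 1) n.succ_pos p)) hz
  refine flat_of_torVanishes (P.π.f 0).hom P.surjective_π P.function_exact_d_π
    fun I ↦ .of_support_subset (S := Set.univ) (fun q _ ↦ .quotient_of_kappa hκ q.asIdeal 0)
      (Set.subset_univ _)
end

section
/- Let R be a noetherian commutative ring and M an R-module. If Ext^i_R(M, κ(p)) = 0 for every i ≥ 0 and every prime ideal p of R, then M = 0. -/
/-
Fix a projective resolution `P → M`. As `κ(p)` is a field, `Hom_R(P, κ(p))` is the `κ(p)`-dual of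
`κ(p) ⊗ P`, so the vanishing of every `Ext^i(M, κ(p))` says that `κ(p) ⊗ P` is exact in every
degree, including `κ(p) ⊗ P₁ → κ(p) ⊗ P₀ → 0`; that is, `Tor_i(κ(p), M) = 0` for all `i ≥ 0`.

Call an ideal `I` good if the same holds for `R ⧸ I`. Since the `Pᵢ` are flat, the sequences
`0 → R ⧸ (I : a) → R ⧸ I → R ⧸ (I + (a)) → 0` make the good ideals an Oka family, so an ideal
maximal among the bad ones (noetherianity) is a prime `p`, and every `p + (s)` with `s ∉ p` is good.
A cycle `x` of `R ⧸ p ⊗ P` is a boundary in `κ(p) ⊗ P`; clearing denominators, `s • x` is a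
boundary for some `s ∉ p`, and as `s` is regular on `R ⧸ p` with good cokernel `R ⧸ (p + (s))`,
`x` is a boundary itself. So `p` is good after all: every ideal is good, and `I = 0` gives
`M = R ⊗ M = 0`.
-/

open CategoryTheory

universe u

open TensorProduct Function

section TensorExactness

variable {R : Type*} [CommRing R]
  {A B C Y₂ Y₁ Y₀ : Type*} [AddCommGroup A] [Module R A] [AddCommGroup B] [Module R B]
  [AddCommGroup C] [Module R C] [AddCommGroup Y₂] [Module R Y₂] [AddCommGroup Y₁] [Module R Y₁]
  [AddCommGroup Y₀] [Module R Y₀]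

lemma LinearMap.rTensor_lTensor_apply (f : A →ₗ[R] B) (u : Y₁ →ₗ[R] Y₀) (x : A ⊗[R] Y₁) :
    f.rTensor Y₀ (u.lTensor A x) = u.lTensor B (f.rTensor Y₁ x) := by
  rw [← LinearMap.comp_apply, ← LinearMap.comp_apply, LinearMap.rTensor_comp_lTensor,
    LinearMap.lTensor_comp_rTensor]

lemma LinearMap.lTensor_lTensor_apply_eq_zero {u : Y₂ →ₗ[R] Y₁} {v : Y₁ →ₗ[R] Y₀}
    (huv : v ∘ₗ u = 0) (x : A ⊗[R] Y₂) : v.lTensor A (u.lTensor A x) = 0 := by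
  rw [← LinearMap.comp_apply, ← LinearMap.lTensor_comp, huv, LinearMap.lTensor_zero,
    LinearMap.zero_apply]

variable {f : A →ₗ[R] B} {g : B →ₗ[R] C} {u : Y₂ →ₗ[R] Y₁} {v : Y₁ →ₗ[R] Y₀}

lemma exists_rTensor_eq_sub_lTensor [Module.Flat R Y₁] (hfg : Exact f g) (hg : Surjective g)
    (hC : Exact (u.lTensor C) (v.lTensor C)) {y : B ⊗[R] Y₁}
    (hy : v.lTensor C (g.rTensor Y₁ y) = 0) :
    ∃ z a, f.rTensor Y₁ a = y - u.lTensor B z := by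
  obtain ⟨z', hz'⟩ := (hC _).mp hy
  obtain ⟨z, rfl⟩ := LinearMap.rTensor_surjective Y₂ hg z'
  refine ⟨z, (Module.Flat.rTensor_exact Y₁ hfg _).mp ?_⟩
  rw [map_sub, LinearMap.rTensor_lTensor_apply, hz', sub_self]

variable [Module.Flat R Y₁] [Module.Flat R Y₀]

theorem exact_lTensor_of_shortExact (hf : Injective f) (hfg : Exact f g) (hg : Surjective g)
    (huv : v ∘ₗ u = 0) (hA : Exact (u.lTensor A) (v.lTensor A))
    (hC : Exact (u.lTensor C) (v.lTensor C)) : Exact (u.lTensor B) (v.lTensor B) := by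
  refine LinearMap.exact_of_comp_of_mem_range (by
    rw [← LinearMap.lTensor_comp, huv, LinearMap.lTensor_zero]) fun x hx => ?_
  obtain ⟨z, a, ha⟩ := exists_rTensor_eq_sub_lTensor hfg hg hC (y := x) (by
    rw [← LinearMap.rTensor_lTensor_apply, hx, map_zero])
  have hva : v.lTensor A a = 0 := Module.Flat.rTensor_preserves_injective_linearMap f hf <| by
    rw [LinearMap.rTensor_lTensor_apply, ha, map_sub, hx,
      LinearMap.lTensor_lTensor_apply_eq_zero huv, sub_zero, map_zero]
  obtain ⟨b, rfl⟩ := (hA a).mp hva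
  exact ⟨z + f.rTensor Y₂ b, by rw [map_add, ← LinearMap.rTensor_lTensor_apply, ha,
    add_sub_cancel]⟩

theorem mem_range_lTensor_of_rTensor_mem_range (hf : Injective f) (hfg : Exact f g)
    (hg : Surjective g) (huv : v ∘ₗ u = 0) (hC : Exact (u.lTensor C) (v.lTensor C))
    {x : A ⊗[R] Y₀} (hx : f.rTensor Y₀ x ∈ LinearMap.range (v.lTensor B)) :
    x ∈ LinearMap.range (v.lTensor A) := by
  obtain ⟨y, hy⟩ := hx
  obtain ⟨z, a, ha⟩ := exists_rTensor_eq_sub_lTensor hfg hg hC (y := y) (by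
    rw [← LinearMap.rTensor_lTensor_apply, hy, ← LinearMap.rTensor_comp_apply,
      hfg.linearMap_comp_eq_zero, LinearMap.rTensor_zero, LinearMap.zero_apply])
  refine ⟨a, Module.Flat.rTensor_preserves_injective_linearMap f hf ?_⟩
  rw [LinearMap.rTensor_lTensor_apply, ha, map_sub, hy,
    LinearMap.lTensor_lTensor_apply_eq_zero huv, sub_zero]

end TensorExactness

section Duality

theorem Function.Exact.of_dualMap {K V₁ V₂ V₃ : Type*} [Field K] [AddCommGroup V₁] [Module K V₁]
    [AddCommGroup V₂] [Module K V₂] [AddCommGroup V₃] [Module K V₃]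
    {f : V₁ →ₗ[K] V₂} {g : V₂ →ₗ[K] V₃} (h : Exact g.dualMap f.dualMap) : Exact f g := by
  rw [LinearMap.exact_iff] at h ⊢
  rw [LinearMap.ker_dualMap_eq_dualAnnihilator_range,
    LinearMap.range_dualMap_eq_dualAnnihilator_ker] at h
  exact (Subspace.dualAnnihilator_inj.mp h).symm

variable {R : Type*} [CommRing R] (K : Type*) [Field K] [Algebra R K]
  {Y₂ Y₁ Y₀ : Type*} [AddCommGroup Y₂] [Module R Y₂] [AddCommGroup Y₁] [Module R Y₁]
  [AddCommGroup Y₀] [Module R Y₀]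

lemma LinearMap.dualMap_baseChange_liftBaseChange {Y Y' : Type*} [AddCommGroup Y] [Module R Y]
    [AddCommGroup Y'] [Module R Y'] (t : Y →ₗ[R] Y') (ψ : Y' →ₗ[R] K) :
    (t.baseChange K).dualMap (LinearMap.liftBaseChangeEquiv K ψ) =
      LinearMap.liftBaseChangeEquiv K (ψ ∘ₗ t) := by
  ext; simp

theorem exact_lTensor_of_exact_precomp {u : Y₂ →ₗ[R] Y₁} {v : Y₁ →ₗ[R] Y₀}
    (h : Exact (fun ψ : Y₀ →ₗ[R] K ↦ ψ ∘ₗ v) (fun ψ : Y₁ →ₗ[R] K ↦ ψ ∘ₗ u)) :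
    Exact (u.lTensor K) (v.lTensor K) := by
  rw [← LinearMap.baseChange_eq_ltensor, ← LinearMap.baseChange_eq_ltensor]
  refine Exact.of_dualMap fun φ ↦ ?_
  obtain ⟨ψ, rfl⟩ := (LinearMap.liftBaseChangeEquiv K).surjective φ
  rw [LinearMap.dualMap_baseChange_liftBaseChange, LinearEquiv.map_eq_zero_iff, h ψ]
  constructor
  · rintro ⟨χ, rfl⟩
    exact ⟨_, LinearMap.dualMap_baseChange_liftBaseChange K v χ⟩
  · rintro ⟨φ', hφ'⟩
    obtain ⟨χ, rfl⟩ := (LinearMap.liftBaseChangeEquiv K).surjective φ'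
    rw [LinearMap.dualMap_baseChange_liftBaseChange] at hφ'
    exact ⟨χ, (LinearMap.liftBaseChangeEquiv K).injective hφ'⟩

end Duality

section QuotientSequence

variable {R : Type*} [CommRing R] (I J : Ideal R) (a : R)

noncomputable def Ideal.mulQuotColon (hJ : I.colon (Ideal.span {a}) = J) : R ⧸ J →ₗ[R] R ⧸ I :=
  Submodule.mapQ J I (a • LinearMap.id) fun x hx ↦ by
    rw [← hJ, Ideal.mem_colon_span_singleton] at hx
    simpa [mul_comm] using hx

variable {I J a}

@[simp]
lemma Ideal.mulQuotColon_mk (hJ : I.colon (Ideal.span {a}) = J) (x : R) :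
    I.mulQuotColon J a hJ (Submodule.Quotient.mk x) = Submodule.Quotient.mk (a * x) := rfl

lemma Ideal.mulQuotColon_injective (hJ : I.colon (Ideal.span {a}) = J) :
    Injective (I.mulQuotColon J a hJ) := by
  rw [← LinearMap.ker_eq_bot, eq_bot_iff]
  intro y hy
  obtain ⟨x, rfl⟩ := Submodule.Quotient.mk_surjective _ y
  rw [LinearMap.mem_ker, mulQuotColon_mk, Submodule.Quotient.mk_eq_zero] at hy
  rw [Submodule.mem_bot, Submodule.Quotient.mk_eq_zero, ← hJ, Ideal.mem_colon_span_singleton,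
    mul_comm]
  exact hy

lemma Ideal.exact_mulQuotColon_factor (hJ : I.colon (Ideal.span {a}) = J) :
    Exact (I.mulQuotColon J a hJ) (Submodule.factor (le_sup_left : I ≤ I ⊔ Ideal.span {a})) := by
  intro y
  obtain ⟨x, rfl⟩ := Submodule.Quotient.mk_surjective _ y
  change (Submodule.Quotient.mk x : R ⧸ (I ⊔ Ideal.span {a})) = 0 ↔ _
  rw [Submodule.Quotient.mk_eq_zero, Submodule.mem_sup]
  constructor
  · rintro ⟨c, hc, _, he, rfl⟩
    obtain ⟨t, rfl⟩ := Ideal.mem_span_singleton'.mp he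
    refine ⟨Submodule.Quotient.mk t, ?_⟩
    rw [mulQuotColon_mk, Submodule.Quotient.eq, mul_comm]
    simpa using I.neg_mem hc
  · rintro ⟨t, ht⟩
    obtain ⟨t, rfl⟩ := Submodule.Quotient.mk_surjective _ t
    rw [mulQuotColon_mk, Submodule.Quotient.eq] at ht
    exact ⟨-(a * t - x), I.neg_mem ht, a * t, Ideal.mem_span_singleton'.mpr ⟨t, mul_comm t a⟩,
      by ring⟩

lemma Ideal.IsPrime.colon_span_singleton_eq {p : Ideal R} (hp : p.IsPrime) {s : R} (hs : s ∉ p) :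
    p.colon (Ideal.span {s}) = p := by
  ext x
  rw [Ideal.mem_colon_span_singleton, mul_comm]
  exact ⟨fun h ↦ (hp.mem_or_mem h).resolve_left hs, fun h ↦ p.mul_mem_left s h⟩

lemma Ideal.mulQuotColon_self {p : Ideal R} (hp : p.IsPrime) {s : R} (hs : s ∉ p) :
    p.mulQuotColon p s (hp.colon_span_singleton_eq hs) = s • LinearMap.id := by
  ext; rfl

end QuotientSequence

lemma exists_smul_mem_range_rTensor {R A B : Type*} [CommRing R] [AddCommGroup A] [Module R A]
    [AddCommGroup B] [Module R B] {S : Submonoid R} {j : A →ₗ[R] B}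
    (hj : ∀ b, ∃ s ∈ S, s • b ∈ LinearMap.range j) (Y : Type*) [AddCommGroup Y] [Module R Y]
    (v : B ⊗[R] Y) : ∃ s ∈ S, s • v ∈ LinearMap.range (j.rTensor Y) := by
  induction v using TensorProduct.induction_on with
  | zero => exact ⟨1, S.one_mem, by simp⟩
  | tmul b y =>
    obtain ⟨s, hs, a, ha⟩ := hj b
    exact ⟨s, hs, a ⊗ₜ y, by rw [LinearMap.rTensor_tmul, ha, smul_tmul']⟩
  | add v w hv hw =>
    obtain ⟨s, hs, v', hv'⟩ := hv
    obtain ⟨t, ht, w', hw'⟩ := hw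
    refine ⟨t * s, S.mul_mem ht hs, t • v' + s • w', ?_⟩
    rw [map_add, map_smul, map_smul, hv', hw', smul_add, smul_smul, smul_smul, mul_comm s t]

section ResidueField

variable {R : Type u} [CommRing R] (p : Ideal R) [p.IsPrime]

noncomputable abbrev quotToKappa : R ⧸ p →ₗ[R] kappa p :=
  (IsScalarTower.toAlgHom R (R ⧸ p) (kappa p)).toLinearMap

lemma quotToKappa_injective : Injective (quotToKappa p) :=
  p.injective_algebraMap_quotient_residueField

lemma exists_smul_mem_range_quotToKappa (c : kappa p) :
    ∃ s ∈ p.primeCompl, s • c ∈ LinearMap.range (quotToKappa p) := by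
  obtain ⟨⟨x, s, hs⟩, hc⟩ := IsLocalization.surj (nonZeroDivisors (R ⧸ p)) c
  obtain ⟨s, rfl⟩ := Ideal.Quotient.mk_surjective s
  refine ⟨s, fun h ↦ ?_, x, ?_⟩
  · exact nonZeroDivisors.ne_zero hs (Ideal.Quotient.eq_zero_iff_mem.mpr h)
  · rw [algebra_compatible_smul (R ⧸ p), Algebra.smul_def, mul_comm]
    exact hc.symm

end ResidueField

section Acyclicity

variable {R : Type u} [CommRing R]

/-- `N ⊗ C` is exact at every `C_i`. At `i = 0` the outgoing differential is
`C.d 0 (0 - 1) = C.d 0 0 = 0`, so this includes surjectivity of `N ⊗ C₁ → N ⊗ C₀`: for a flat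
resolution `C` of `M` it says `Tor_i(N, M) = 0` for all `i ≥ 0`. -/
def TensorAcyclic (C : ChainComplex (ModuleCat.{u} R) ℕ) (N : Type*) [AddCommGroup N]
    [Module R N] : Prop :=
  ∀ i, Exact ((C.d (i + 1) i).hom.lTensor N) ((C.d i (i - 1)).hom.lTensor N)

lemma ChainComplex.hom_d_comp_d (C : ChainComplex (ModuleCat.{u} R) ℕ) (i j k : ℕ) :
    (C.d j k).hom ∘ₗ (C.d i j).hom = 0 := by
  rw [← ModuleCat.hom_comp, C.d_comp_d, ModuleCat.hom_zero]

namespace TensorAcyclic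

variable {C : ChainComplex (ModuleCat.{u} R) ℕ}

lemma of_subsingleton (N : Type*) [AddCommGroup N] [Module R N] [Subsingleton N] :
    TensorAcyclic C N :=
  fun _ _ ↦ ⟨fun _ ↦ ⟨0, Subsingleton.elim _ _⟩, fun _ ↦ Subsingleton.elim _ _⟩

variable [∀ i, Module.Flat R (C.X i)]

lemma of_shortExact {A B C' : Type*} [AddCommGroup A] [Module R A] [AddCommGroup B] [Module R B]
    [AddCommGroup C'] [Module R C'] {f : A →ₗ[R] B} {g : B →ₗ[R] C'} (hf : Injective f)
    (hfg : Exact f g) (hg : Surjective g) (hA : TensorAcyclic C A) (hC : TensorAcyclic C C') :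
    TensorAcyclic C B :=
  fun i ↦ exact_lTensor_of_shortExact hf hfg hg (C.hom_d_comp_d _ _ _) (hA i) (hC i)

theorem quotient_of_kappa (p : Ideal R) [hp : p.IsPrime] (hκ : TensorAcyclic C (kappa p))
    (h : ∀ s ∉ p, TensorAcyclic C (R ⧸ (p ⊔ Ideal.span {s}))) : TensorAcyclic C (R ⧸ p) := by
  intro i
  set u := (C.d (i + 1) i).hom
  set v := (C.d i (i - 1)).hom
  refine LinearMap.exact_of_comp_of_mem_range (by
    rw [← LinearMap.lTensor_comp, C.hom_d_comp_d, LinearMap.lTensor_zero]) fun x hx ↦ ?_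
  have hκx : v.lTensor (kappa p) ((quotToKappa p).rTensor _ x) = 0 := by
    rw [← LinearMap.rTensor_lTensor_apply, hx, map_zero]
  obtain ⟨y, hy⟩ := (hκ i _).mp hκx
  obtain ⟨s, hs, w, hw⟩ := exists_smul_mem_range_rTensor (exists_smul_mem_range_quotToKappa p) _ y
  have hsx : u.lTensor (R ⧸ p) w = s • x :=
    Module.Flat.rTensor_preserves_injective_linearMap _ (quotToKappa_injective p) <| by
      rw [LinearMap.rTensor_lTensor_apply, hw, map_smul, hy, map_smul]
  have hJ := hp.colon_span_singleton_eq hs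
  refine mem_range_lTensor_of_rTensor_mem_range (p.mulQuotColon_injective hJ)
    (p.exact_mulQuotColon_factor hJ) (Submodule.factor_surjective _) (C.hom_d_comp_d _ _ _)
    (h s hs (i + 1)) ?_
  rw [p.mulQuotColon_self hp hs, LinearMap.rTensor_smul, LinearMap.rTensor_id,
    LinearMap.smul_apply, LinearMap.id_apply]
  exact ⟨w, hsx⟩

lemma isOka : Ideal.IsOka fun I : Ideal R ↦ TensorAcyclic C (R ⧸ I) where
  top := by
    have : Subsingleton (R ⧸ (⊤ : Ideal R)) := Submodule.Quotient.subsingleton_iff.mpr rfl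
    exact of_subsingleton _
  oka {I a} hsup hcolon := of_shortExact (I.mulQuotColon_injective rfl)
    (I.exact_mulQuotColon_factor rfl) (Submodule.factor_surjective _) hcolon hsup

theorem quotient [IsNoetherianRing R] (hκ : ∀ (p : Ideal R) [p.IsPrime], TensorAcyclic C (kappa p))
    (I : Ideal R) : TensorAcyclic C (R ⧸ I) := by
  by_contra hI
  obtain ⟨p, hp⟩ := exists_maximal_of_wellFoundedGT (fun J : Ideal R ↦ ¬TensorAcyclic C (R ⧸ J))
    ⟨I, hI⟩
  have : p.IsPrime := isOka.isPrime_of_maximal_not hp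
  exact hp.prop <| quotient_of_kappa p (hκ p) fun s hs ↦
    not_not.mp <| hp.not_prop_of_gt <| Submodule.lt_sup_iff_notMem.mpr hs

end TensorAcyclic

end Acyclicity

section Resolution

variable {R : Type u} [CommRing R]

lemma ChainComplex.exact_comp_hom_of_exactAt_linearYonedaObj
    {X : ChainComplex (ModuleCat.{u} R) ℕ} {K : ModuleCat.{u} R} {i : ℕ}
    (h : (X.linearYonedaObj R K).ExactAt i) :
    Exact (fun ψ : X.X (i - 1) →ₗ[R] K ↦ ψ ∘ₗ (X.d i (i - 1)).hom)
      (fun ψ : X.X i →ₗ[R] K ↦ ψ ∘ₗ (X.d (i + 1) i).hom) := by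
  rw [HomologicalComplex.exactAt_iff' _ (i - 1) i (i + 1) (by cases i <;> simp) (by simp),
    ShortComplex.ShortExact.moduleCat_exact_iff_function_exact] at h
  replace h : Exact (fun φ : X.X (i - 1) ⟶ K ↦ X.d i (i - 1) ≫ φ)
      (fun φ : X.X i ⟶ K ↦ X.d (i + 1) i ≫ φ) := h
  intro ψ
  have := h (ModuleCat.ofHom ψ)
  simp only [ModuleCat.hom_ext_iff, ModuleCat.hom_comp, ConcreteCategory.hom_ofHom,
    ModuleCat.hom_zero, Set.mem_range] at this
  exact this.trans ⟨fun ⟨χ, hχ⟩ ↦ ⟨χ.hom, hχ⟩, fun ⟨χ, hχ⟩ ↦ ⟨ModuleCat.ofHom χ, hχ⟩⟩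

namespace CategoryTheory.ProjectiveResolution

variable {X : ModuleCat.{u} R} (P : ProjectiveResolution X)

instance flat_X (i : ℕ) : Module.Flat R (P.complex.X i) := by
  have : Module.Projective R (P.complex.X i) := by
    rw [IsProjective.iff_projective]
    exact P.projective i
  exact Module.Flat.of_projective

theorem tensorAcyclic_of_subsingleton_ext (K : Type u) [Field K] [Algebra R K]
    (h : ∀ i, Subsingleton (((Ext R (ModuleCat.{u} R) i).obj (Opposite.op X)).obj
      (ModuleCat.of R K))) :
    TensorAcyclic P.complex K := fun i ↦ by
  refine exact_lTensor_of_exact_precomp K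
    (ChainComplex.exact_comp_hom_of_exactAt_linearYonedaObj (K := ModuleCat.of R K) ?_)
  rw [HomologicalComplex.exactAt_iff_isZero_homology]
  have := h i
  exact ModuleCat.isZero_of_subsingleton _ |>.of_iso (P.isoExt i _).symm

theorem subsingleton_tensor_of_tensorAcyclic {N : Type*} [AddCommGroup N] [Module R N]
    (h : TensorAcyclic P.complex N) : Subsingleton (N ⊗[R] X) := by
  have hd : Surjective ((P.complex.d 1 0).hom.lTensor N) := by
    simpa using h 0
  have hπ : Surjective (P.π.f 0).hom := (ModuleCat.epi_iff_surjective _).mp inferInstance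
  have hπd : (P.π.f 0).hom ∘ₗ (P.complex.d 1 0).hom = 0 := by
    rw [← ModuleCat.hom_comp, P.complex_d_comp_π_f_zero, ModuleCat.hom_zero]
  refine subsingleton_of_forall_eq 0 fun x ↦ ?_
  obtain ⟨y, rfl⟩ := LinearMap.lTensor_surjective N hπ x
  obtain ⟨z, rfl⟩ := hd y
  exact LinearMap.lTensor_lTensor_apply_eq_zero hπd z

end CategoryTheory.ProjectiveResolution

end Resolution

/-- Let `R` be a noetherian commutative ring and `M` an `R`-module.
If `Ext^i_R(M, κ(p)) = 0` for every `i ≥ 0` and every prime ideal `p` of `R`, then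
`M = 0`. -/
theorem stmt_14 (R : Type u) [CommRing R] [IsNoetherianRing R]
    (M : Type u) [AddCommGroup M] [Module R M]
    (h : ∀ (i : ℕ), ∀ (p : Ideal R) [p.IsPrime],
      Subsingleton (((Ext R (ModuleCat.{u} R) i).obj
        (Opposite.op (ModuleCat.of R M))).obj (ModuleCat.of R (kappa p)))) :
    Subsingleton M := by
  obtain ⟨P⟩ := HasProjectiveResolution.out (Z := ModuleCat.of R M)
  have hκ (p : Ideal R) [p.IsPrime] : TensorAcyclic P.complex (kappa p) :=
    P.tensorAcyclic_of_subsingleton_ext (kappa p) (h · p)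
  have := P.subsingleton_tensor_of_tensorAcyclic (TensorAcyclic.quotient hκ ⊥)
  exact ((TensorProduct.congr (Submodule.quotEquivOfEqBot ⊥ rfl) (LinearEquiv.refl R M)).trans
    (TensorProduct.lid R M)).symm.subsingleton
end

section
/- Let R be a commutative ring, p a prime ideal of R, and M an R-module. Then for every i ≥ 0 there is an isomorphism Ext^i_R(M, κ(p)) ≅ Hom_{κ(p)}(Tor_i^R(κ(p), M), κ(p)) of κ(p)-vector spaces (duality between Ext into the residue field and Tor with the residue field). -/
/-!
Compute both sides with a projective resolution `P` of `M`. Ext is the cohomology of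
`Hom_R(P, κ) ≅ Hom_κ(κ ⊗_R P, κ)`, Tor is the homology of `κ ⊗_R P`, and over the field `κ`
the functor `Hom_κ(-, κ)` is exact, so it commutes with taking homology. Finally, an `R`-linear
map from a `κ`-vector space to `κ` is automatically `κ`-linear, because every element of `κ`
is a fraction `r / s` with `r, s ∈ R`.
-/

open CategoryTheory

universe u

abbrev LinearMap.homology {R X Y Z : Type*} [Ring R] [AddCommGroup X] [AddCommGroup Y]
    [AddCommGroup Z] [Module R X] [Module R Y] [Module R Z]
    (f : X →ₗ[R] Y) (g : Y →ₗ[R] Z) :=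
  LinearMap.ker g ⧸ (LinearMap.range f).comap (LinearMap.ker g).subtype

namespace LinearMap

section RestrictScalars

variable (R : Type*) {S X Y Z : Type*} [CommRing R] [Ring S] [Algebra R S]
  [AddCommGroup X] [AddCommGroup Y] [AddCommGroup Z]
  [Module S X] [Module S Y] [Module S Z] [Module R X] [Module R Y] [Module R Z]
  [IsScalarTower R S X] [IsScalarTower R S Y] [IsScalarTower R S Z]

noncomputable def homologyRestrictScalarsEquiv (f : X →ₗ[S] Y) (g : Y →ₗ[S] Z) :
    homology (f.restrictScalars R) (g.restrictScalars R) ≃ₗ[R] homology f g :=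
  (Submodule.Quotient.equiv _ (((range f).comap (ker g).subtype).restrictScalars R)
    { AddEquiv.refl (ker g) with map_smul' := fun _ _ => rfl }
    (by
      ext y
      exact ⟨fun ⟨_, hz, hzy⟩ => hzy ▸ hz, fun hy => ⟨y, hy, rfl⟩⟩)).trans
    (Submodule.Quotient.restrictScalarsEquiv R _)

end RestrictScalars

section FieldDuality

variable {K X Y Z : Type*} [Field K] [AddCommGroup X] [AddCommGroup Y] [AddCommGroup Z]
  [Module K X] [Module K Y] [Module K Z] {f : X →ₗ[K] Y} {g : Y →ₗ[K] Z}

variable (f g) in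
noncomputable def dualRestrictCycles : ker f.dualMap →ₗ[K] Module.Dual K (homology f g) :=
  (Submodule.dualQuotEquivDualAnnihilator _).symm.toLinearMap ∘ₗ
    (((ker g).subtype.dualMap ∘ₗ (ker f.dualMap).subtype).codRestrict _ <| by
      rintro ⟨φ, hφ⟩
      rw [Submodule.mem_dualAnnihilator]
      rintro y ⟨x, hx⟩
      change φ ((ker g).subtype y) = 0
      rw [← hx]
      exact LinearMap.congr_fun (mem_ker.1 hφ) x)

theorem dualRestrictCycles_surjective (hfg : g ∘ₗ f = 0) :
    Function.Surjective (dualRestrictCycles f g) := by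
  intro α
  obtain ⟨φ, hφ⟩ := dualMap_surjective_of_injective (ker g).injective_subtype
    (α ∘ₗ Submodule.mkQ _)
  have hφ_apply (y : ker g) : φ y = α (Submodule.Quotient.mk y) := LinearMap.congr_fun hφ y
  have hf_cycle (x : X) : f x ∈ ker g := LinearMap.congr_fun hfg x
  refine ⟨⟨φ, ?_⟩, ?_⟩
  · ext x
    change φ (f x) = 0
    have hboundary : (Submodule.Quotient.mk ⟨f x, hf_cycle x⟩ : homology f g) = 0 :=
      (Submodule.Quotient.mk_eq_zero _).2 (Submodule.mem_comap.2 (mem_range.2 ⟨x, rfl⟩))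
    rw [hφ_apply ⟨f x, hf_cycle x⟩, hboundary, map_zero]
  · exact Submodule.linearMap_qext _ (LinearMap.ext hφ_apply)

theorem ker_dualRestrictCycles :
    ker (dualRestrictCycles f g) = (range g.dualMap).comap (ker f.dualMap).subtype := by
  ext φ
  rw [Submodule.mem_comap, range_dualMap_eq_dualAnnihilator_ker, Submodule.mem_dualAnnihilator,
    mem_ker]
  constructor
  · intro h y hy
    exact LinearMap.congr_fun h (Submodule.Quotient.mk ⟨y, hy⟩)
  · intro h
    exact Submodule.linearMap_qext _ (LinearMap.ext fun y => h y y.2)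

variable (f g) in
noncomputable def homologyDualMapEquiv (hfg : g ∘ₗ f = 0) :
    homology g.dualMap f.dualMap ≃ₗ[K] Module.Dual K (homology f g) :=
  (Submodule.quotEquivOfEq _ _ ker_dualRestrictCycles.symm).trans
    ((dualRestrictCycles f g).quotKerEquivOfSurjective (dualRestrictCycles_surjective hfg))

end FieldDuality

section Fractions

variable {R K : Type*} [CommRing R] [Field K] [Algebra R K]
  (hK : ∀ c : K, ∃ r s : R, algebraMap R K s ≠ 0 ∧ algebraMap R K s * c = algebraMap R K r)
include hK

theorem map_smul_of_forall_exists_mul_eq {V : Type*} [AddCommGroup V] [Module R V]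
    [Module K V] [IsScalarTower R K V] (φ : V →ₗ[R] K) (c : K) (x : V) : φ (c • x) = c * φ x := by
  obtain ⟨r, s, hs, hrs⟩ := hK c
  have hsc : s • (c • x) = r • x := by
    rw [← algebraMap_smul K s (c • x), ← algebraMap_smul K r x, smul_smul, hrs]
  apply mul_left_cancel₀ hs
  rw [← Algebra.smul_def, ← φ.map_smul, hsc, φ.map_smul, Algebra.smul_def, ← hrs, mul_assoc]

variable (R) in
noncomputable def restrictScalarsEquivOfForallExistsMulEq (V : Type*) [AddCommGroup V]
    [Module R V] [Module K V] [IsScalarTower R K V] : (V →ₗ[K] K) ≃ₗ[R] (V →ₗ[R] K) where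
  toFun φ := φ.restrictScalars R
  invFun φ := { φ with map_smul' := φ.map_smul_of_forall_exists_mul_eq hK }
  map_add' _ _ := rfl
  map_smul' _ _ := rfl
  left_inv _ := rfl
  right_inv _ := rfl

end Fractions

section Complexes

variable {R K A B C : Type*} [CommRing R] [CommRing K] [Algebra R K]
  [AddCommGroup A] [AddCommGroup B] [AddCommGroup C]
  [Module R A] [Module R B] [Module R C] {δ : A →ₗ[R] B} {ε : B →ₗ[R] C}

theorem lcomp_comp_lcomp_eq_zero (N : Type*) [AddCommGroup N] [Module R N] (h : ε ∘ₗ δ = 0) :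
    lcomp R N δ ∘ₗ lcomp R N ε = 0 := by
  ext φ x
  exact congr(φ ($h x)).trans (map_zero φ)

theorem lTensor_comp_lTensor_eq_zero (N : Type*) [AddCommGroup N] [Module R N]
    (h : ε ∘ₗ δ = 0) : ε.lTensor N ∘ₗ δ.lTensor N = 0 := by
  rw [← lTensor_comp, h, lTensor_zero]

theorem baseChange_comp_eq_zero (h : ε ∘ₗ δ = 0) :
    ε.baseChange K ∘ₗ δ.baseChange K = 0 := by
  rw [← baseChange_comp, h, baseChange_zero]

variable (K) in
theorem dualMap_baseChange_comp_eq_zero (h : ε ∘ₗ δ = 0) :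
    ((δ.baseChange K).dualMap ∘ₗ (ε.baseChange K).dualMap).restrictScalars R = 0 := by
  rw [dualMap_comp_dualMap, baseChange_comp_eq_zero h]
  ext
  simp

theorem liftBaseChange_lcomp (f : A →ₗ[R] B) (φ : B →ₗ[R] K) :
    (lcomp R K f φ).liftBaseChange K = (f.baseChange K).dualMap (φ.liftBaseChange K) := by
  ext
  rfl

end Complexes

end LinearMap

namespace CategoryTheory.ShortComplex

noncomputable def moduleCatMkHomologyIso {R : Type u} [Ring R] {X Y Z : Type u} [AddCommGroup X]
    [AddCommGroup Y] [AddCommGroup Z] [Module R X] [Module R Y] [Module R Z]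
    (f : X →ₗ[R] Y) (g : Y →ₗ[R] Z) (hfg : g ∘ₗ f = 0) :
    (moduleCatMk f g hfg).homology ≅ ModuleCat.of R (f.homology g) :=
  (moduleCatMk f g hfg).moduleCatHomologyIso ≪≫
    (Submodule.quotEquivOfEq _ _ (LinearMap.range_codRestrict _ _ _)).toModuleIso

section LCompDuality

variable {R K : Type u} [CommRing R] [Field K] [Algebra R K]
  {A B C : Type u} [AddCommGroup A] [AddCommGroup B] [AddCommGroup C]
  [Module R A] [Module R B] [Module R C] {δ : A →ₗ[R] B} {ε : B →ₗ[R] C}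

noncomputable def moduleCatMkLCompIsoDualMap (h : ε ∘ₗ δ = 0) :
    moduleCatMk _ _ (LinearMap.lcomp_comp_lcomp_eq_zero K h) ≅
      moduleCatMk ((ε.baseChange K).dualMap.restrictScalars R)
        ((δ.baseChange K).dualMap.restrictScalars R)
        (LinearMap.dualMap_baseChange_comp_eq_zero K h) :=
  isoMk ((LinearMap.liftBaseChangeEquiv K).restrictScalars R).toModuleIso
    ((LinearMap.liftBaseChangeEquiv K).restrictScalars R).toModuleIso
    ((LinearMap.liftBaseChangeEquiv K).restrictScalars R).toModuleIso
    (by ext φ : 2; exact (LinearMap.liftBaseChange_lcomp ε φ).symm)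
    (by ext φ : 2; exact (LinearMap.liftBaseChange_lcomp δ φ).symm)

noncomputable def homologyLCompEquiv
    (hK : ∀ c : K, ∃ r s : R, algebraMap R K s ≠ 0 ∧ algebraMap R K s * c = algebraMap R K r)
    (h : ε ∘ₗ δ = 0) :
    (moduleCatMk _ _ (LinearMap.lcomp_comp_lcomp_eq_zero K h)).homology ≃ₗ[R]
      ((moduleCatMk _ _ (LinearMap.lTensor_comp_lTensor_eq_zero K h)).homology →ₗ[R] K) :=
  (homologyMapIso (moduleCatMkLCompIsoDualMap h) ≪≫
      moduleCatMkHomologyIso _ _ _).toLinearEquiv ≪≫ₗ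
    LinearMap.homologyRestrictScalarsEquiv R _ _ ≪≫ₗ
    (LinearMap.homologyDualMapEquiv _ _
      (LinearMap.baseChange_comp_eq_zero h)).restrictScalars R ≪≫ₗ
    LinearMap.restrictScalarsEquivOfForallExistsMulEq R hK _ ≪≫ₗ
    -- `(δ.baseChange K).restrictScalars R` is definitionally `δ.lTensor K`
    LinearEquiv.arrowCongr ((LinearMap.homologyRestrictScalarsEquiv R _ _).symm ≪≫ₗ
      (moduleCatMkHomologyIso _ _ _).toLinearEquiv.symm) (LinearEquiv.refl R K)

end LCompDuality

end CategoryTheory.ShortComplex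

theorem ComplexShape.exists_prev_up_eq_next_down (i : ℕ) :
    ∃ j, (ComplexShape.up ℕ).prev i = j ∧ (ComplexShape.down ℕ).next i = j := by
  cases i with
  | zero => exact ⟨0, CochainComplex.prev_nat_zero, ChainComplex.next_nat_zero⟩
  | succ n => exact ⟨n, CochainComplex.prev_nat_succ n, ChainComplex.next_nat_succ n⟩

theorem HomologicalComplex.hom_d_comp_hom_d {R : Type u} [Ring R] {ι : Type*}
    {c : ComplexShape ι} (C : HomologicalComplex (ModuleCat.{u} R) c) (i j k : ι) :
    (C.d j k).hom ∘ₗ (C.d i j).hom = 0 :=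
  congrArg ModuleCat.Hom.hom (C.d_comp_d i j k)

namespace CategoryTheory.ProjectiveResolution

variable {R : Type u} [CommRing R] {M : ModuleCat.{u} R} (P : ProjectiveResolution M)
  (N : Type u) [AddCommGroup N] [Module R N]

noncomputable def extIsoHomology (i j : ℕ) (hj : (ComplexShape.up ℕ).prev i = j) :
    ((Ext R (ModuleCat.{u} R) i).obj (Opposite.op M)).obj (ModuleCat.of R N) ≅
      (ShortComplex.moduleCatMk _ _
        (LinearMap.lcomp_comp_lcomp_eq_zero N (P.complex.hom_d_comp_hom_d (i + 1) i j))).homology :=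
  P.isoExt i _ ≪≫ ShortComplex.homologyMapIso
    ((P.complex.linearYonedaObj R (ModuleCat.of R N)).isoSc' j i (i + 1) hj
        (CochainComplex.next ℕ i) ≪≫
      ShortComplex.isoMk ModuleCat.homLinearEquiv.toModuleIso ModuleCat.homLinearEquiv.toModuleIso
        ModuleCat.homLinearEquiv.toModuleIso (by ext; rfl) (by ext; rfl))

noncomputable def torIsoHomology (i j : ℕ) (hj : (ComplexShape.down ℕ).next i = j) :
    ((Tor (ModuleCat.{u} R) i).obj (ModuleCat.of R N)).obj M ≅
      (ShortComplex.moduleCatMk _ _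
        (LinearMap.lTensor_comp_lTensor_eq_zero N
          (P.complex.hom_d_comp_hom_d (i + 1) i j))).homology :=
  P.isoLeftDerivedObj _ i ≪≫ ShortComplex.homologyMapIso
    (HomologicalComplex.isoSc' _ (i + 1) i j (ChainComplex.prev ℕ i) hj ≪≫
      ShortComplex.isoMk (Iso.refl _) (Iso.refl _) (Iso.refl _) (by ext; rfl) (by ext; rfl))

end CategoryTheory.ProjectiveResolution

theorem kappa_exists_mul_eq {R : Type u} [CommRing R] (p : Ideal R) [p.IsPrime] (c : kappa p) :
    ∃ r s : R, algebraMap R (kappa p) s ≠ 0 ∧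
      algebraMap R (kappa p) s * c = algebraMap R (kappa p) r := by
  obtain ⟨⟨a, ⟨s, hs⟩⟩, h⟩ := IsLocalization.surj (nonZeroDivisors (R ⧸ p)) (c : p.ResidueField)
  obtain ⟨a, rfl⟩ := Ideal.Quotient.mk_surjective a
  obtain ⟨s, rfl⟩ := Ideal.Quotient.mk_surjective s
  refine ⟨a, s, ?_, ?_⟩
  · rw [← Ideal.algebraMap_quotient_residueField_mk]
    exact IsFractionRing.to_map_ne_zero_of_mem_nonZeroDivisors hs
  · rw [mul_comm]
    exact h

/-- Let `R` be a commutative ring, `p` a prime ideal of `R` and `M`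
an `R`-module.  For every `i ≥ 0` there is an isomorphism
`Ext^i_R(M, κ(p)) ≅ Hom_{κ(p)}(Tor_i^R(κ(p), M), κ(p))`.
(Both sides are `κ(p)`-vector spaces; since `κ(p)` is a localization of a quotient of
`R`, an `R`-linear map between `κ(p)`-vector spaces is automatically `κ(p)`-linear, so
the isomorphism of `κ(p)`-vector spaces is expressed here as an `R`-linear equivalence,
and likewise `Hom_{κ(p)}(-, κ(p))` coincides with the `R`-module of `R`-linear maps.) -/
theorem stmt_15 (R : Type u) [CommRing R] (p : Ideal R) [p.IsPrime]
    (M : Type u) [AddCommGroup M] [Module R M] (i : ℕ) :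
    Nonempty
      ((((Ext R (ModuleCat.{u} R) i).obj
          (Opposite.op (ModuleCat.of R M))).obj (ModuleCat.of R (kappa p))) ≃ₗ[R]
        ((((Tor (ModuleCat.{u} R) i).obj
          (ModuleCat.of R (kappa p))).obj (ModuleCat.of R M)) →ₗ[R] kappa p)) := by
  obtain ⟨P⟩ := (inferInstance : HasProjectiveResolution (ModuleCat.of R M)).out
  obtain ⟨j, hprev, hnext⟩ := ComplexShape.exists_prev_up_eq_next_down i
  exact ⟨(P.extIsoHomology _ i j hprev).toLinearEquiv ≪≫ₗ
    ShortComplex.homologyLCompEquiv (kappa_exists_mul_eq p)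
      (P.complex.hom_d_comp_hom_d (i + 1) i j) ≪≫ₗ
    LinearEquiv.arrowCongr (P.torIsoHomology _ i j hnext).toLinearEquiv.symm
      (LinearEquiv.refl R _)⟩
end
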